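/- Fix d ≥ 1, β > 0, L > 0. There exists a constant c = c(β,L,d) > 0 such that for every φ ∈ H_d(β,L;[0,1]^d) with sup_{x∈[0,1]^d} |φ(x)| ≤ 1 and every maximizer x* of |φ| over [0,1]^d, there is a radius r > 0 with: (a) the Lebesgue measure of B_{x*}(r) ∩ [0,1]^d is at least c·|φ(x*)|^{d/β}, and (b) |φ(x)| ≥ |φ(x*)|/2 for all x ∈ B_{x*}(r) ∩ [0,1]^d. -/

import Mathlib

open MeasureTheory

/-- The unit cube `[0,1]^d` in `ℝ^d`. -/
def unitCube (d : ℕ) : Set (EuclideanSpace ℝ (Fin d)) :=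
  {x | ∀ i, x i ∈ Set.Icc (0 : ℝ) 1}

/-- Multivariate Taylor polynomial of `f` at `y`, of order `k`, evaluated at `x`
(derivatives taken within `I`). -/
noncomputable def taylorPoly (d : ℕ) (f : EuclideanSpace ℝ (Fin d) → ℝ)
    (I : Set (EuclideanSpace ℝ (Fin d))) (k : ℕ) (y x : EuclideanSpace ℝ (Fin d)) : ℝ :=
  ∑ i ∈ Finset.range (k + 1),
    (i.factorial : ℝ)⁻¹ * iteratedFDerivWithin ℝ i f I y (fun _ => x - y)

/-- The isotropic Hölder class `H_d(β, L; I)`: for `β ≤ 1` the functions with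
`|f x − f y| ≤ L‖x − y‖₂^β`; for `β > 1` the `⌊β⌋`-times continuously differentiable
functions whose Taylor polynomial of order `⌊β⌋ = ⌈β⌉₊ - 1` (the largest integer strictly
smaller than `β`) approximates `f` to order `L‖x − y‖₂^β`. -/
def IsotropicHolder (d : ℕ) (β L : ℝ) (I : Set (EuclideanSpace ℝ (Fin d)))
    (f : EuclideanSpace ℝ (Fin d) → ℝ) : Prop :=
  if β ≤ 1 then
    ∀ x ∈ I, ∀ y ∈ I, |f x - f y| ≤ L * ‖x - y‖ ^ β
  else
    ContDiffOn ℝ (⌈β⌉₊ - 1 : ℕ) f I ∧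
      ∀ x ∈ I, ∀ y ∈ I, |f x - taylorPoly d f I (⌈β⌉₊ - 1) y x| ≤ L * ‖x - y‖ ^ β

/-!
Let `M = |φ x*|` and let `P` be the Taylor polynomial of `φ` at `x*` of degree `⌊β⌋` (the constant
`φ x*` when `β ≤ 1`), so that `|φ - P| ≤ L ‖· - x*‖^β` on the cube. At the scale `H ≍ M^{1/β}`, the
box of side `H` at `x*` that points into the cube carries `|P| ≤ |φ| + L (H √d)^β ≤ 2M`. A
polynomial vanishing on a set with interior vanishes identically, so on the finite-dimensional
space of polynomials of bounded degree the sup over such a box (one of `2^d` boxes after rescaling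
by `H`) bounds every homogeneous part on the unit ball. Hence `|P x - P x*| ≤ C M δ` when
`‖x - x*‖ ≤ δ H`, while `|φ x - P x| ≤ δ^β M`. A small `δ = δ(β, L, d)` gives `|φ x| ≥ M / 2` on
the ball of radius `δ H ≍ M^{1/β}`, and such a ball meets the cube in volume `≳ (δ H)^d`.
-/

open Metric Set

theorem LinearMap.exists_norm_le_mul_norm_of_ker_le {W F G : Type*} [AddCommGroup W] [Module ℝ W]
    [FiniteDimensional ℝ W] [NormedAddCommGroup F] [NormedSpace ℝ F] [NormedAddCommGroup G]
    [NormedSpace ℝ G] (T : W →ₗ[ℝ] F) (S : W →ₗ[ℝ] G) (h : ker T ≤ ker S) :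
    ∃ C, 0 ≤ C ∧ ∀ a, ‖S a‖ ≤ C * ‖T a‖ := by
  let g := ((ker T).liftQ S h ∘ₗ T.quotKerEquivRange.symm.toLinearMap).toContinuousLinearMap
  refine ⟨‖g‖, g.opNorm_nonneg, fun a => ?_⟩
  have hga : S a = g ⟨T a, mem_range_self T a⟩ := by
    simp [g, quotKerEquivRange_symm_apply_image]
  rw [hga]
  exact g.le_opNorm _

section PolynomialMaps

variable {E : Type*} [NormedAddCommGroup E] [NormedSpace ℝ E]

instance ContinuousMultilinearMap.finiteDimensional {F : Type*} [NormedAddCommGroup F]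
    [NormedSpace ℝ F] [FiniteDimensional ℝ E] [FiniteDimensional ℝ F] (n : ℕ) :
    FiniteDimensional ℝ (E [×n]→L[ℝ] F) :=
  Module.Finite.of_injective ContinuousMultilinearMap.toMultilinearMapLinear
    ContinuousMultilinearMap.toMultilinearMap_injective

/-- A polynomial map of degree `≤ k`, through its homogeneous parts; these multilinear maps need not
be symmetric, so only their values on the diagonal are determined by the polynomial. -/
abbrev PolyCoeffs (E : Type*) [NormedAddCommGroup E] [NormedSpace ℝ E] (k : ℕ) :=
  (i : Fin (k + 1)) → E [×i]→L[ℝ] ℝ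

variable {k : ℕ}

def polyEval (a : PolyCoeffs E k) (v : E) : ℝ := ∑ i, a i fun _ => v

def PolyCoeffs.toFormalMultilinearSeries (a : PolyCoeffs E k) : FormalMultilinearSeries ℝ E ℝ :=
  fun n => if h : n < k + 1 then a ⟨n, h⟩ else 0

def PolyCoeffs.dilate (t : ℝ) (a : PolyCoeffs E k) : PolyCoeffs E k := fun i => t ^ (i : ℕ) • a i

theorem ContinuousMultilinearMap.apply_diag_smul {n : ℕ} (f : E [×n]→L[ℝ] ℝ) (t : ℝ) (v : E) :
    (f fun _ => t • v) = t ^ n * f fun _ => v := by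
  simp [f.map_smul_univ (fun _ => t) (fun _ => v)]

theorem polyEval_dilate (t : ℝ) (a : PolyCoeffs E k) (v : E) :
    polyEval (a.dilate t) v = polyEval a (t • v) := by
  simp [polyEval, PolyCoeffs.dilate, ContinuousMultilinearMap.apply_diag_smul]

theorem continuous_polyEval (a : PolyCoeffs E k) : Continuous (polyEval a) :=
  continuous_finsetSum _ fun i _ => (a i).cont.comp (continuous_pi fun _ => continuous_id)

theorem hasFiniteFPowerSeriesOnBall_polyEval (a : PolyCoeffs E k) :
    HasFiniteFPowerSeriesOnBall (polyEval a) a.toFormalMultilinearSeries 0 (k + 1) ⊤ := by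
  refine .mk' (fun m hm => dif_neg (by omega)) ENNReal.zero_lt_top fun y _ => ?_
  rw [zero_add, polyEval, ← Fin.sum_univ_eq_sum_range]
  exact Finset.sum_congr rfl fun i _ => by simp [PolyCoeffs.toFormalMultilinearSeries, Fin.is_le]

theorem apply_diag_eq_zero_of_polyEval_eq_zero {a : PolyCoeffs E k} {K : Set E}
    (hK : (interior K).Nonempty) (h : ∀ v ∈ K, polyEval a v = 0) (i : Fin (k + 1)) (w : E) :
    (a i fun _ => w) = 0 := by
  have hser := (hasFiniteFPowerSeriesOnBall_polyEval a).toHasFPowerSeriesOnBall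
  obtain ⟨z, hz⟩ := hK
  have hzero : polyEval a = 0 := funext fun v =>
    AnalyticOnNhd.eqOn_zero_of_preconnected_of_eventuallyEq_zero
      (fun y _ => hser.analyticAt_of_mem (by simp)) isPreconnected_univ (mem_univ z)
      (Filter.eventually_of_mem (mem_interior_iff_mem_nhds.1 hz) h) (mem_univ v)
  have := (hzero ▸ hser).hasFPowerSeriesAt.apply_eq_zero i w
  simpa [PolyCoeffs.toFormalMultilinearSeries, Fin.is_le] using this

theorem ContinuousMultilinearMap.abs_apply_diag_sub_apply_zero_le {n : ℕ} (f : E [×n]→L[ℝ] ℝ)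
    {A : ℝ} (hA : ∀ w : E, ‖w‖ ≤ 1 → |f fun _ => w| ≤ A) {w : E} (hw : ‖w‖ ≤ 1) :
    |(f fun _ => w) - f fun _ => 0| ≤ A * ‖w‖ := by
  have hA0 : 0 ≤ A := (abs_nonneg _).trans (hA 0 (by simp))
  rcases n with _ | n
  · simpa [Subsingleton.elim (fun _ : Fin 0 => w) fun _ => 0] using by positivity
  rcases eq_or_ne w 0 with rfl | hw0
  · simp
  have hu : ‖‖w‖⁻¹ • w‖ ≤ 1 := by simp [norm_smul, hw0]
  have hw' : w = ‖w‖ • ‖w‖⁻¹ • w := by simp [smul_smul, hw0]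
  calc |(f fun _ => w) - f fun _ => 0| = ‖w‖ ^ (n + 1) * |f fun _ => ‖w‖⁻¹ • w| := by
        rw [hw', f.apply_diag_smul, ← hw', show (fun _ : Fin (n + 1) => (0 : E)) = 0 from rfl,
          f.map_zero, sub_zero, abs_mul, abs_of_nonneg (by positivity)]
    _ ≤ ‖w‖ * A := by
        gcongr
        · exact pow_le_of_le_one (norm_nonneg w) hw (by omega)
        · exact hA _ hu
    _ = A * ‖w‖ := mul_comm _ _

theorem abs_polyEval_sub_polyEval_zero_le {a : PolyCoeffs E k} {A : ℝ}
    (hA : ∀ i, ∀ w : E, ‖w‖ ≤ 1 → |a i fun _ => w| ≤ A) {w : E} (hw : ‖w‖ ≤ 1) :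
    |polyEval a w - polyEval a 0| ≤ (k + 1) * A * ‖w‖ := by
  rw [polyEval, polyEval, ← Finset.sum_sub_distrib]
  calc _ ≤ ∑ i, |(a i fun _ => w) - a i fun _ => 0| := Finset.abs_sum_le_sum_abs _ _
    _ ≤ ∑ _i : Fin (k + 1), A * ‖w‖ :=
        Finset.sum_le_sum fun i _ => (a i).abs_apply_diag_sub_apply_zero_le (hA i) hw
    _ = (k + 1) * A * ‖w‖ := by simp; ring

variable [FiniteDimensional ℝ E]

variable (k) in
theorem exists_abs_apply_diag_le {K : Set E} (hKc : IsCompact K) (hK : (interior K).Nonempty) :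
    ∃ C, ∀ (a : PolyCoeffs E k) (B : ℝ), (∀ v ∈ K, |polyEval a v| ≤ B) →
      ∀ i, ∀ w : E, ‖w‖ ≤ 1 → |a i fun _ => w| ≤ C * B := by
  have := isCompact_iff_compactSpace.mp hKc
  have := isCompact_iff_compactSpace.mp (isCompact_closedBall (0 : E) 1)
  let T : PolyCoeffs E k →ₗ[ℝ] C(K, ℝ) :=
    { toFun a := ⟨fun v => polyEval a v, (continuous_polyEval a).comp continuous_subtype_val⟩
      map_add' a b := by ext; simp [polyEval, Finset.sum_add_distrib]
      map_smul' c a := by ext; simp [polyEval, Finset.mul_sum] }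
  let S : PolyCoeffs E k →ₗ[ℝ] Fin (k + 1) → C(closedBall (0 : E) 1, ℝ) :=
    { toFun a i := ⟨fun w => a i fun _ => w,
        (a i).cont.comp (continuous_pi fun _ => continuous_subtype_val)⟩
      map_add' a b := by ext; simp
      map_smul' c a := by ext; simp }
  have hker : LinearMap.ker T ≤ LinearMap.ker S := fun a ha => by
    have hT : ∀ v ∈ K, polyEval a v = 0 := fun v hv => congr($ha ⟨v, hv⟩)
    ext i w
    exact apply_diag_eq_zero_of_polyEval_eq_zero hK hT i w
  obtain ⟨C, hC0, hC⟩ := T.exists_norm_le_mul_norm_of_ker_le S hker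
  refine ⟨C, fun a B hB i w hw => ?_⟩
  have hB0 : 0 ≤ B := (abs_nonneg _).trans (hB _ (interior_subset hK.some_mem))
  calc |a i fun _ => w| = ‖S a i ⟨w, mem_closedBall_zero_iff.2 hw⟩‖ := rfl
    _ ≤ ‖S a‖ := (ContinuousMap.norm_coe_le_norm _ _).trans (norm_le_pi_norm _ i)
    _ ≤ C * ‖T a‖ := hC a
    _ ≤ C * B := by
        gcongr
        exact (ContinuousMap.norm_le _ hB0).2 fun v => hB v v.2

variable (k) in
theorem exists_abs_polyEval_sub_le {ι : Type*} [Finite ι] {K : ι → Set E}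
    (hKc : ∀ j, IsCompact (K j)) (hK : ∀ j, (interior (K j)).Nonempty) :
    ∃ C, ∀ j (a : PolyCoeffs E k) (B : ℝ), (∀ v ∈ K j, |polyEval a v| ≤ B) →
      ∀ w : E, ‖w‖ ≤ 1 → |polyEval a w - polyEval a 0| ≤ C * B * ‖w‖ := by
  choose C hC using fun j => exists_abs_apply_diag_le k (hKc j) (hK j)
  obtain ⟨C', hC'⟩ := Finite.bddAbove_range C
  refine ⟨(k + 1) * C', fun j a B hB w hw => ?_⟩
  have hB0 : 0 ≤ B := (abs_nonneg _).trans (hB _ (interior_subset (hK j).some_mem))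
  calc _ ≤ (k + 1) * (C j * B) * ‖w‖ := abs_polyEval_sub_polyEval_zero_le (hC j a B hB) hw
    _ ≤ (k + 1) * (C' * B) * ‖w‖ := by gcongr; exact hC' ⟨j, rfl⟩
    _ = (k + 1) * C' * B * ‖w‖ := by ring

end PolynomialMaps

section UnitCube

variable {d : ℕ}

theorem EuclideanSpace.norm_le_sqrt_mul_of_forall_abs_le {v : EuclideanSpace ℝ (Fin d)} {b : ℝ}
    (hb : 0 ≤ b) (h : ∀ j, |v j| ≤ b) : ‖v‖ ≤ √d * b := by
  rw [EuclideanSpace.norm_eq, ← Real.sqrt_sq hb, ← Real.sqrt_mul (Nat.cast_nonneg d)]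
  gcongr
  calc ∑ j, ‖v j‖ ^ 2 ≤ ∑ _j : Fin d, b ^ 2 :=
        Finset.sum_le_sum fun j _ => by
          rw [Real.norm_eq_abs]; exact pow_le_pow_left₀ (abs_nonneg _) (h j) 2
    _ = d * b ^ 2 := by simp

noncomputable def orthantCenter (s : Fin d → Bool) : EuclideanSpace ℝ (Fin d) :=
  WithLp.toLp 2 fun j => if s j then 1 / 2 else -1 / 2

/-- The unit cube with a vertex at `0` in the closed orthant of sign pattern `s`
(`true` for a nonnegative coordinate). -/
def orthantBox (s : Fin d → Bool) : Set (EuclideanSpace ℝ (Fin d)) :=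
  {v | ∀ j, |v j - orthantCenter s j| ≤ 1 / 2}

theorem closedBall_subset_orthantBox (s : Fin d → Bool) :
    closedBall (orthantCenter s) (1 / 2) ⊆ orthantBox s := fun v hv j =>
  calc |v j - orthantCenter s j| = |(v - orthantCenter s) j| := rfl
    _ ≤ ‖v - orthantCenter s‖ := by simpa using PiLp.norm_apply_le (v - orthantCenter s) j
    _ ≤ 1 / 2 := mem_closedBall_iff_norm.1 hv

theorem interior_orthantBox_nonempty (s : Fin d → Bool) : (interior (orthantBox s)).Nonempty :=
  ⟨orthantCenter s, interior_maximal (ball_subset_closedBall.trans (closedBall_subset_orthantBox s))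
    isOpen_ball (mem_ball_self (by norm_num))⟩

theorem norm_le_sqrt_of_mem_orthantBox {s : Fin d → Bool} {v : EuclideanSpace ℝ (Fin d)}
    (hv : v ∈ orthantBox s) : ‖v‖ ≤ √d := by
  refine (EuclideanSpace.norm_le_sqrt_mul_of_forall_abs_le zero_le_one fun j => ?_).trans_eq
    (mul_one _)
  have hc : |orthantCenter s j| = 1 / 2 := by
    simp only [orthantCenter]; split_ifs <;> norm_num
  linarith [hv j, abs_sub_abs_le_abs_sub (v j) (orthantCenter s j)]

theorem isCompact_orthantBox (s : Fin d → Bool) : IsCompact (orthantBox s) := by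
  refine Metric.isCompact_of_isClosed_isBounded ?_ ?_
  · simp only [orthantBox, ofPred_forall]
    exact isClosed_iInter fun j => isClosed_le
      (((continuous_apply j).comp (PiLp.continuous_ofLp 2 _)).sub continuous_const).abs
      continuous_const
  · exact (isBounded_closedBall (x := 0) (r := √d)).subset fun v hv =>
      mem_closedBall_zero_iff.2 (norm_le_sqrt_of_mem_orthantBox hv)

theorem add_smul_mem_unitCube {x : EuclideanSpace ℝ (Fin d)} (hx : x ∈ unitCube d) {t : ℝ}
    (ht₀ : 0 ≤ t) (ht : t ≤ 1 / 2) {v : EuclideanSpace ℝ (Fin d)}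
    (hv : v ∈ orthantBox fun j => decide (x j ≤ 1 / 2)) : x + t • v ∈ unitCube d := by
  intro j
  have hvj := abs_le.1 (hv j)
  obtain ⟨hx₀, hx₁⟩ := hx j
  simp only [orthantCenter, decide_eq_true_eq] at hvj
  simp only [PiLp.add_apply, PiLp.smul_apply, smul_eq_mul, mem_Icc]
  split_ifs at hvj with hxj <;> constructor <;> nlinarith

theorem closedBall_add_smul_orthantCenter_subset_unitCube {x : EuclideanSpace ℝ (Fin d)}
    (hx : x ∈ unitCube d) {t : ℝ} (ht₀ : 0 < t) (ht : t ≤ 1 / 2) :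
    closedBall (x + t • orthantCenter fun j => decide (x j ≤ 1 / 2)) (t / 2) ⊆ unitCube d := by
  intro z hz
  rw [mem_closedBall_iff_norm] at hz
  have hv : t⁻¹ • (z - x) ∈ orthantBox fun j => decide (x j ≤ 1 / 2) := by
    refine closedBall_subset_orthantBox _ (mem_closedBall_iff_norm.2 ?_)
    calc ‖t⁻¹ • (z - x) - orthantCenter _‖ = t⁻¹ * ‖z - (x + t • orthantCenter _)‖ := by
          rw [← norm_smul_of_nonneg (inv_nonneg.2 ht₀.le), smul_sub, smul_sub, smul_add,
            inv_smul_smul₀ ht₀.ne', sub_add_eq_sub_sub]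
      _ ≤ t⁻¹ * (t / 2) := by gcongr
      _ = 1 / 2 := by field_simp
  simpa [smul_smul, ht₀.ne'] using add_smul_mem_unitCube hx ht₀.le ht hv

variable (d) in
theorem exists_volume_closedBall_inter_unitCube_ge :
    ∃ c > 0, ∀ x ∈ unitCube d, ∀ r, 0 < r → r ≤ 1 →
      ENNReal.ofReal (c * r ^ d) ≤ volume (closedBall x r ∩ unitCube d) := by
  set V := volume (ball (0 : EuclideanSpace ℝ (Fin d)) 1)
  have hVfin : V ≠ ⊤ := measure_ball_lt_top.ne
  have hV : 0 < V.toReal := ENNReal.toReal_pos (measure_ball_pos _ _ one_pos).ne' hVfin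
  refine ⟨(1 / (4 * (√d + 1))) ^ d * V.toReal, by positivity, fun x hx r hr hr1 => ?_⟩
  set c := orthantCenter fun j => decide (x j ≤ 1 / 2)
  set t := r / (2 * (√d + 1))
  have ht : 0 < t := by positivity
  have htr : t * (2 * (√d + 1)) = r := div_mul_cancel₀ _ (by positivity)
  have hc : ‖c‖ ≤ √d :=
    norm_le_sqrt_of_mem_orthantBox
      (closedBall_subset_orthantBox _ (mem_closedBall_self (by norm_num)))
  have hsub : closedBall (x + t • c) (t / 2) ⊆ closedBall x r ∩ unitCube d := by
    refine subset_inter (closedBall_subset_closedBall' ?_)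
      (closedBall_add_smul_orthantCenter_subset_unitCube hx ht (by nlinarith [Real.sqrt_nonneg d]))
    rw [dist_eq_norm, add_sub_cancel_left, norm_smul_of_nonneg ht.le]
    nlinarith [Real.sqrt_nonneg d]
  calc ENNReal.ofReal ((1 / (4 * (√d + 1))) ^ d * V.toReal * r ^ d)
      = ENNReal.ofReal ((t / 2) ^ d) * V := by
        conv_rhs => rw [← ENNReal.ofReal_toReal hVfin]
        rw [← ENNReal.ofReal_mul (by positivity)]
        congr 1
        simp only [t]; field_simp; ring
    _ = volume (closedBall (x + t • c) (t / 2)) := by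
        rw [Measure.addHaar_closedBall _ _ (by positivity), finrank_euclideanSpace_fin]
    _ ≤ volume (closedBall x r ∩ unitCube d) := measure_mono hsub

end UnitCube

theorem mul_rpow_le_of_le_div_rpow_one_div {β L M u : ℝ} (hβ : 0 < β) (hL : 0 < L) (hM : 0 ≤ M)
    (hu : 0 ≤ u) (h : u ≤ (M / L) ^ (1 / β)) : L * u ^ β ≤ M :=
  calc L * u ^ β ≤ L * ((M / L) ^ (1 / β)) ^ β := by gcongr
    _ = M := by
        rw [← Real.rpow_mul (by positivity), one_div_mul_cancel hβ.ne', Real.rpow_one]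
        field_simp

section Holder

variable {d : ℕ}

noncomputable def taylorCoeffs (φ : EuclideanSpace ℝ (Fin d) → ℝ)
    (I : Set (EuclideanSpace ℝ (Fin d))) (k : ℕ) (y : EuclideanSpace ℝ (Fin d)) : PolyCoeffs (EuclideanSpace ℝ (Fin d)) k :=
  fun i => ((i : ℕ).factorial : ℝ)⁻¹ • iteratedFDerivWithin ℝ i φ I y

theorem polyEval_taylorCoeffs (φ : EuclideanSpace ℝ (Fin d) → ℝ)
    (I : Set (EuclideanSpace ℝ (Fin d))) (k : ℕ) (x y : EuclideanSpace ℝ (Fin d)) :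
    polyEval (taylorCoeffs φ I k y) (x - y) = taylorPoly d φ I k y x := by
  simp [polyEval, taylorCoeffs, taylorPoly, Fin.sum_univ_eq_sum_range
    (fun i => (i.factorial : ℝ)⁻¹ * iteratedFDerivWithin ℝ i φ I y fun _ => x - y)]

noncomputable def holderOrder (β : ℝ) : ℕ := if β ≤ 1 then 0 else ⌈β⌉₊ - 1

theorem IsotropicHolder.abs_sub_polyEval_taylorCoeffs_le {β L : ℝ}
    {I : Set (EuclideanSpace ℝ (Fin d))} {φ : EuclideanSpace ℝ (Fin d) → ℝ}
    (hφ : IsotropicHolder d β L I φ) {x y : EuclideanSpace ℝ (Fin d)} (hx : x ∈ I) (hy : y ∈ I) :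
    |φ x - polyEval (taylorCoeffs φ I (holderOrder β) y) (x - y)| ≤ L * ‖x - y‖ ^ β := by
  rw [polyEval_taylorCoeffs]
  unfold IsotropicHolder at hφ
  unfold holderOrder
  split_ifs at hφ ⊢
  · simpa [taylorPoly] using hφ x hx y hy
  · exact hφ.2 x hx y hy

theorem abs_polyEval_dilate_le_of_mem_orthantBox {β L : ℝ} (hβ : 0 ≤ β) (hL : 0 ≤ L)
    {φ : EuclideanSpace ℝ (Fin d) → ℝ} {k : ℕ} {a : PolyCoeffs (EuclideanSpace ℝ (Fin d)) k}
    {y : EuclideanSpace ℝ (Fin d)} (hy : y ∈ unitCube d)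
    (ha : ∀ x ∈ unitCube d, |φ x - polyEval a (x - y)| ≤ L * ‖x - y‖ ^ β)
    (hmax : ∀ x ∈ unitCube d, |φ x| ≤ |φ y|) {H : ℝ} (hH₀ : 0 ≤ H) (hH : H ≤ 1 / 2)
    (hLH : L * (H * √d) ^ β ≤ |φ y|) {v : EuclideanSpace ℝ (Fin d)}
    (hv : v ∈ orthantBox fun j => decide (y j ≤ 1 / 2)) :
    |polyEval (a.dilate H) v| ≤ 2 * |φ y| := by
  have hx := add_smul_mem_unitCube hy hH₀ hH hv
  have hHv : ‖H • v‖ ≤ H * √d := by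
    rw [norm_smul_of_nonneg hH₀]; gcongr; exact norm_le_sqrt_of_mem_orthantBox hv
  have hrem := ha _ hx
  rw [add_sub_cancel_left] at hrem
  have hHvβ : L * ‖H • v‖ ^ β ≤ L * (H * √d) ^ β := by gcongr
  rw [polyEval_dilate]
  linarith [abs_sub_abs_le_abs_sub (polyEval a (H • v)) (φ (y + H • v)),
    abs_sub_comm (polyEval a (H • v)) (φ (y + H • v)), hmax _ hx]

theorem abs_sub_le_of_norm_sub_le_mul {β L C H δ : ℝ} (hβ : 0 < β) (hL : 0 ≤ L) {k : ℕ}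
    (hC : ∀ s (a : PolyCoeffs (EuclideanSpace ℝ (Fin d)) k) (B : ℝ),
      (∀ v ∈ orthantBox s, |polyEval a v| ≤ B) →
        ∀ w, ‖w‖ ≤ 1 → |polyEval a w - polyEval a 0| ≤ C * B * ‖w‖)
    {φ : EuclideanSpace ℝ (Fin d) → ℝ} {a : PolyCoeffs (EuclideanSpace ℝ (Fin d)) k}
    {y : EuclideanSpace ℝ (Fin d)} (hy : y ∈ unitCube d)
    (ha : ∀ x ∈ unitCube d, |φ x - polyEval a (x - y)| ≤ L * ‖x - y‖ ^ β)
    (hmax : ∀ x ∈ unitCube d, |φ x| ≤ |φ y|) (hH₀ : 0 < H) (hH : H ≤ 1 / 2)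
    (hLH : L * (H * (√d + 1)) ^ β ≤ |φ y|) (hδ₀ : 0 < δ) (hδ : δ ≤ 1)
    {x : EuclideanSpace ℝ (Fin d)} (hx : x ∈ unitCube d) (hxy : ‖x - y‖ ≤ δ * H) :
    |φ x - φ y| ≤ (2 * |C| * δ + δ ^ β) * |φ y| := by
  have ha0 : polyEval a 0 = φ y := by
    have := ha y hy
    rw [sub_self, norm_zero, Real.zero_rpow hβ.ne', mul_zero, abs_nonpos_iff, sub_eq_zero] at this
    exact this.symm
  have hbox : ∀ v ∈ orthantBox fun j => decide (y j ≤ 1 / 2),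
      |polyEval (a.dilate H) v| ≤ 2 * |φ y| :=
    fun v => abs_polyEval_dilate_le_of_mem_orthantBox hβ.le hL hy ha hmax hH₀.le hH
      (le_trans (by gcongr; linarith) hLH)
  have hw : ‖H⁻¹ • (x - y)‖ ≤ δ := by
    rw [norm_smul_of_nonneg (inv_nonneg.2 hH₀.le), inv_mul_le_iff₀ hH₀]; linarith
  have hpoly : |polyEval a (x - y) - φ y| ≤ 2 * |C| * δ * |φ y| := by
    have := hC _ (a.dilate H) _ hbox _ (hw.trans hδ)
    rw [polyEval_dilate, polyEval_dilate, smul_smul, mul_inv_cancel₀ hH₀.ne', one_smul, smul_zero,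
      ha0] at this
    calc _ ≤ C * (2 * |φ y|) * ‖H⁻¹ • (x - y)‖ := this
      _ ≤ |C| * (2 * |φ y|) * ‖H⁻¹ • (x - y)‖ := by gcongr; exact le_abs_self C
      _ ≤ |C| * (2 * |φ y|) * δ := by gcongr
      _ = 2 * |C| * δ * |φ y| := by ring
  have hrem : |φ x - polyEval a (x - y)| ≤ δ ^ β * |φ y| := by
    calc _ ≤ L * ‖x - y‖ ^ β := ha x hx
      _ ≤ L * (δ * (H * (√d + 1))) ^ β := by
          gcongr; nlinarith [mul_pos hδ₀ hH₀, Real.sqrt_nonneg d]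
      _ = δ ^ β * (L * (H * (√d + 1)) ^ β) := by
          rw [Real.mul_rpow hδ₀.le (by positivity)]; ring
      _ ≤ δ ^ β * |φ y| := by gcongr
  calc |φ x - φ y| ≤ |φ x - polyEval a (x - y)| + |polyEval a (x - y) - φ y| := abs_sub_le _ _ _
    _ ≤ (2 * |C| * δ + δ ^ β) * |φ y| := by linarith

variable (d) in
theorem exists_plateau_radius {β L : ℝ} (hβ : 0 < β) (hL : 0 < L) :
    ∃ ρ > 0, ρ ≤ 1 ∧ ∀ φ, IsotropicHolder d β L (unitCube d) φ → ∀ y ∈ unitCube d,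
      (∀ x ∈ unitCube d, |φ x| ≤ |φ y|) → |φ y| ≤ 1 →
      ∀ x ∈ unitCube d, ‖x - y‖ ≤ ρ * |φ y| ^ (1 / β) → |φ y| / 2 ≤ |φ x| := by
  obtain ⟨C, hC⟩ := exists_abs_polyEval_sub_le (holderOrder β) (isCompact_orthantBox (d := d))
    interior_orthantBox_nonempty
  set ρ₀ := min (1 / 2) ((1 / L) ^ (1 / β) / (√d + 1))
  set δ := min ((1 / 4) ^ (1 / β)) (1 / (8 * |C| + 1))
  have hρ₀ : 0 < ρ₀ := by positivity
  have hδ : 0 < δ := by positivity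
  have hδ1 : δ ≤ 1 :=
    (min_le_left _ _).trans (Real.rpow_le_one (by norm_num) (by norm_num) (by positivity))
  have hδβ : δ ^ β ≤ 1 / 4 := by
    calc δ ^ β ≤ ((1 / 4) ^ (1 / β)) ^ β := by gcongr; exact min_le_left _ _
      _ = 1 / 4 := by rw [← Real.rpow_mul (by norm_num), one_div_mul_cancel hβ.ne', Real.rpow_one]
  have hδC : 2 * |C| * δ ≤ 1 / 4 := by
    have : δ * (8 * |C| + 1) ≤ 1 := (le_div_iff₀ (by positivity)).1 (min_le_right _ _)
    nlinarith
  refine ⟨δ * ρ₀, by positivity, ?_, fun φ hφ y hy hmax hM1 x hx hxy => ?_⟩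
  · exact (mul_le_of_le_one_right hδ.le ((min_le_left _ _).trans (by norm_num))).trans hδ1
  rcases (abs_nonneg (φ y)).eq_or_lt with hM0 | hM0
  · simp [← hM0]
  set M := |φ y|
  set H := ρ₀ * M ^ (1 / β)
  have hH : 0 < H := by positivity
  have hH2 : H ≤ 1 / 2 := (mul_le_of_le_one_right hρ₀.le
    (Real.rpow_le_one hM0.le hM1 (by positivity))).trans (min_le_left _ _)
  have hLH : L * (H * (√d + 1)) ^ β ≤ M := by
    refine mul_rpow_le_of_le_div_rpow_one_div hβ hL hM0.le (by positivity) ?_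
    calc H * (√d + 1) = ρ₀ * (√d + 1) * M ^ (1 / β) := by ring
      _ ≤ (1 / L) ^ (1 / β) * M ^ (1 / β) := by
          gcongr; exact (le_div_iff₀ (by positivity)).1 (min_le_right _ _)
      _ = (M / L) ^ (1 / β) := by rw [← Real.mul_rpow (by positivity) hM0.le, one_div_mul_eq_div]
  have hclose := abs_sub_le_of_norm_sub_le_mul hβ hL.le hC hy
    (fun x hx => hφ.abs_sub_polyEval_taylorCoeffs_le hx hy) hmax hH hH2 hLH hδ hδ1 hx
    (hxy.trans_eq (mul_assoc _ _ _))
  have hM : M - |φ x| ≤ |φ x - φ y| := abs_sub_comm (φ y) (φ x) ▸ abs_sub_abs_le_abs_sub _ _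
  nlinarith

end Holder

theorem holder_plateau_general (d : ℕ) (β L : ℝ) (hβ : 0 < β) (hL : 0 < L) :
    ∃ c > (0 : ℝ), ∀ φ : EuclideanSpace ℝ (Fin d) → ℝ,
      IsotropicHolder d β L (unitCube d) φ →
      (∀ x ∈ unitCube d, |φ x| ≤ 1) →
      ∀ xstar ∈ unitCube d, (∀ x ∈ unitCube d, |φ x| ≤ |φ xstar|) →
      ∃ r > (0 : ℝ),
        ENNReal.ofReal (c * |φ xstar| ^ ((d : ℝ) / β)) ≤
            volume (Metric.closedBall xstar r ∩ unitCube d) ∧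
          ∀ x ∈ Metric.closedBall xstar r ∩ unitCube d, |φ xstar| / 2 ≤ |φ x| := by
  obtain ⟨ρ, hρ, hρ1, hplateau⟩ := exists_plateau_radius d hβ hL
  obtain ⟨c, hc, hvol⟩ := exists_volume_closedBall_inter_unitCube_ge d
  refine ⟨c * ρ ^ d, by positivity, fun φ hφ hsup y hy hmax => ?_⟩
  have hM1 := hsup y hy
  rcases (abs_nonneg (φ y)).eq_or_lt with hM0 | hM0
  · refine ⟨1, one_pos, (hvol y hy 1 one_pos le_rfl).trans' ?_, fun x _ => by simp [← hM0]⟩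
    refine ENNReal.ofReal_le_ofReal ?_
    calc c * ρ ^ d * |φ y| ^ ((d : ℝ) / β) ≤ c * 1 * 1 := by
          gcongr
          · exact pow_le_one₀ hρ.le hρ1
          · rw [← hM0]; exact Real.zero_rpow_le_one _
      _ = c * 1 ^ d := by simp
  · refine ⟨ρ * |φ y| ^ (1 / β), by positivity, (hvol y hy _ (by positivity) ?_).trans' ?_,
      fun x hx => hplateau φ hφ y hy hmax hM1 x hx.2 (mem_closedBall_iff_norm.1 hx.1)⟩
    · exact mul_le_one₀ hρ1 (by positivity) (Real.rpow_le_one hM0.le hM1 (by positivity))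
    · rw [mul_pow, ← Real.rpow_natCast (_ ^ _), ← Real.rpow_mul hM0.le, one_div_mul_eq_div,
        mul_assoc]

/-- There is a constant `c = c(β,L,d) > 0` such that for every `φ ∈ H_d(β,L;[0,1]^d)` with
`sup |φ| ≤ 1` and every maximizer `x*` of `|φ|` over `[0,1]^d`, there is a radius `r > 0`
with `λ(B_{x*}(r) ∩ [0,1]^d) ≥ c·|φ(x*)|^{d/β}` and `|φ(x)| ≥ |φ(x*)|/2` on
`B_{x*}(r) ∩ [0,1]^d`. -/
theorem holder_plateau (d : ℕ) (hd : 1 ≤ d) (β L : ℝ) (hβ : 0 < β) (hL : 0 < L) :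
    ∃ c > (0 : ℝ), ∀ φ : EuclideanSpace ℝ (Fin d) → ℝ,
      IsotropicHolder d β L (unitCube d) φ →
      (∀ x ∈ unitCube d, |φ x| ≤ 1) →
      ∀ xstar ∈ unitCube d, (∀ x ∈ unitCube d, |φ x| ≤ |φ xstar|) →
      ∃ r > (0 : ℝ),
        ENNReal.ofReal (c * |φ xstar| ^ ((d : ℝ) / β)) ≤
            volume (Metric.closedBall xstar r ∩ unitCube d) ∧
          ∀ x ∈ Metric.closedBall xstar r ∩ unitCube d, |φ xstar| / 2 ≤ |φ x| :=
  holder_plateau_general d β L hβ hL
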